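/- Weakness of the energy norm: For the components of the solution decomposition u = S + E + W (with E = E₁ + E₂ the boundary layers and W = W₁χ_{(0,1)} + W₂χ_{(1,2)} the inner layer) and the corresponding components of w = εu'', the energy norm satisfies |||(S,S̃)||| ≲ 1, |||(E,Ẽ)||| ≲ ε^{m−1/2}, and |||(W,W̃)||| ≲ ε^{5/2}; in particular the layer contributions vanish in the energy norm as ε → 0. -/

import Mathlib

open Set

/-- The L² norm of `f` over the interval `(a,b)`. -/
noncomputable def L2 (f : ℝ → ℝ) (a b : ℝ) : ℝ := Real.sqrt (∫ x in a..b, (f x)^2)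

/-- The square of the energy norm `|||(u,w)|||² = ‖w‖² + β²/2 ‖u'‖² + δ ‖u‖²`
on `Ω = (0,2)`. -/
noncomputable def energySq (β δ : ℝ) (u w : ℝ → ℝ) : ℝ :=
  (∫ x in (0:ℝ)..2, (w x)^2) + β^2/2 * (∫ x in (0:ℝ)..2, (deriv u x)^2)
    + δ * (∫ x in (0:ℝ)..2, (u x)^2)

/-- The bounds of the solution decomposition `u = S + E₁ + E₂ + W₁ + W₂`. -/
def SolDecompBounds (q m : ℕ) (β C₀ ε : ℝ) (S E₁ E₂ W₁ W₂ : ℝ → ℝ) : Prop :=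
  ∀ k : ℕ, k ≤ q + 1 →
    (L2 (iteratedDeriv k S) 0 1 + L2 (iteratedDeriv k S) 1 2 ≤ C₀) ∧
    (∀ x ∈ Ioo (0:ℝ) 2,
      |iteratedDeriv k E₁ x| ≤ C₀ * ε ^ ((m:ℝ) - (k:ℝ)) * Real.exp (-(β*x)/ε)) ∧
    (∀ x ∈ Ioo (0:ℝ) 2,
      |iteratedDeriv k E₂ x| ≤ C₀ * ε ^ ((m:ℝ) - (k:ℝ)) * Real.exp (-(β*(2-x))/ε)) ∧
    (∀ x ∈ Ioo (0:ℝ) 1,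
      |iteratedDeriv k W₁ x| ≤ C₀ * ε ^ ((3:ℝ) - (k:ℝ)) * Real.exp (-(β*(1-x))/ε)) ∧
    (∀ x ∈ Ioo (1:ℝ) 2,
      |iteratedDeriv k W₂ x| ≤ C₀ * ε ^ ((3:ℝ) - (k:ℝ)) * Real.exp (-(β*(x-1))/ε))

/-- The bounds of the decomposition `w = S̃ + Ẽ₁ + Ẽ₂ + W̃₁ + W̃₂` of `w = εu''`. -/
def TildeDecompBounds (q m : ℕ) (β C₀ ε : ℝ) (St E₁t E₂t W₁t W₂t : ℝ → ℝ) : Prop :=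
  ∀ k : ℕ, k ≤ q + 1 →
    (∀ x ∈ Ioo (0:ℝ) 1 ∪ Ioo 1 2, |iteratedDeriv k St x| ≤ C₀ * ε) ∧
    (∀ x ∈ Ioo (0:ℝ) 2,
      |iteratedDeriv k E₁t x| ≤ C₀ * ε ^ ((m:ℝ) - 1 - (k:ℝ)) * Real.exp (-(β*x)/ε)) ∧
    (∀ x ∈ Ioo (0:ℝ) 2,
      |iteratedDeriv k E₂t x| ≤ C₀ * ε ^ ((m:ℝ) - 1 - (k:ℝ)) * Real.exp (-(β*(2-x))/ε)) ∧
    (∀ x ∈ Ioo (0:ℝ) 1,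
      |iteratedDeriv k W₁t x| ≤ C₀ * ε ^ ((2:ℝ) - (k:ℝ)) * Real.exp (-(β*(1-x))/ε)) ∧
    (∀ x ∈ Ioo (1:ℝ) 2,
      |iteratedDeriv k W₂t x| ≤ C₀ * ε ^ ((2:ℝ) - (k:ℝ)) * Real.exp (-(β*(x-1))/ε))

/-!
On each piece of `(0,2)` a layer component of amplitude `ε^r` is dominated by
`A e^{-β(x-a)/ε} + B e^{-β(b-x)/ε}` with `A, B ≲ ε^r`. These exponentials lie in `(0,1]`, so the
square of the component is at most `2A² e^{-β(x-a)/ε} + 2B² e^{-β(b-x)/ε}`, whose integral is at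
most `2(A² + B²) ε/β ≲ ε^{2r+1}`. In the squared energy norm the worst amplitudes are those of
`Ẽ` and `E'` (`r = m - 1`) and of `W̃` and `W'` (`r = 2`), giving `ε^{2m-1}` and `ε^5`; the
smooth part is bounded directly by its `L²` bounds and `|S̃| ≲ ε ≤ 1`.
-/

open MeasureTheory

lemma intervalIntegral_le_of_nonneg_of_le_Ioo {f g : ℝ → ℝ} {a b : ℝ} (hab : a ≤ b)
    (hf : ∀ x ∈ Ioo a b, 0 ≤ f x) (hg : IntervalIntegrable g volume a b)
    (h : ∀ x ∈ Ioo a b, f x ≤ g x) :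
    ∫ x in a..b, f x ≤ ∫ x in a..b, g x := by
  simp only [intervalIntegral.integral_of_le hab, integral_Ioc_eq_integral_Ioo]
  exact integral_mono_of_nonneg ((ae_restrict_iff' measurableSet_Ioo).2 (ae_of_all _ hf))
    (hg.1.mono_set Ioo_subset_Ioc_self) ((ae_restrict_iff' measurableSet_Ioo).2 (ae_of_all _ h))

lemma intervalIntegral_le_add_adjacent_of_nonneg {f : ℝ → ℝ} {a b c : ℝ} (hab : a ≤ b)
    (hbc : b ≤ c) (hf : ∀ x, 0 ≤ f x) :
    ∫ x in a..c, f x ≤ (∫ x in a..b, f x) + ∫ x in b..c, f x := by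
  have hpieces : 0 ≤ (∫ x in a..b, f x) + ∫ x in b..c, f x :=
    add_nonneg (intervalIntegral.integral_nonneg hab fun x _ => hf x)
      (intervalIntegral.integral_nonneg hbc fun x _ => hf x)
  by_cases hfi : IntervalIntegrable f volume a c
  · refine (intervalIntegral.integral_add_adjacent_intervals ?_ ?_).ge
    · refine hfi.mono_set ?_
      rw [uIcc_of_le hab, uIcc_of_le (hab.trans hbc)]
      exact Icc_subset_Icc_right hbc
    · refine hfi.mono_set ?_
      rw [uIcc_of_le hbc, uIcc_of_le (hab.trans hbc)]
      exact Icc_subset_Icc_left hab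
  · rwa [intervalIntegral.integral_undef hfi]

lemma integral_exp_neg_mul_sub_le {c : ℝ} (hc : 0 < c) (a b : ℝ) :
    ∫ x in a..b, Real.exp (-(c * (x - a))) ≤ 1 / c := by
  have hderiv : ∀ x ∈ uIcc a b,
      HasDerivAt (fun y => -Real.exp (-(c * (y - a))) / c) (Real.exp (-(c * (x - a)))) x := by
    intro x _
    have hexponent : HasDerivAt (fun y => -(c * (y - a))) (-c) x := by
      simpa using (((hasDerivAt_id x).sub_const a).const_mul c).fun_neg
    exact hexponent.exp.neg.div_const c |>.congr_deriv (by field_simp)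
  rw [intervalIntegral.integral_eq_sub_of_hasDerivAt hderiv
    (Continuous.intervalIntegrable (by fun_prop) _ _)]
  have := Real.exp_pos (-(c * (b - a)))
  simp only [sub_self, mul_zero, neg_zero, Real.exp_zero]
  rw [div_sub_div_same, div_le_div_iff_of_pos_right hc]
  linarith

lemma integral_exp_neg_mul_sub_le' {c : ℝ} (hc : 0 < c) (a b : ℝ) :
    ∫ x in a..b, Real.exp (-(c * (b - x))) ≤ 1 / c := by
  have hmirror := intervalIntegral.integral_comp_sub_left
    (fun y => Real.exp (-(c * (y - a)))) (a + b) (a := a) (b := b)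
  have hinner : ∀ x, a + b - x - a = b - x := fun x => by ring
  simp only [hinner, add_sub_cancel_left, add_sub_cancel_right] at hmirror
  exact hmirror.trans_le (integral_exp_neg_mul_sub_le hc a b)

lemma integral_sq_le_of_abs_le {g : ℝ → ℝ} {a b A : ℝ} (hab : a ≤ b)
    (h : ∀ x ∈ Ioo a b, |g x| ≤ A) :
    ∫ x in a..b, g x ^ 2 ≤ A ^ 2 * (b - a) := by
  have hpt : ∀ x ∈ Ioo a b, g x ^ 2 ≤ A ^ 2 := fun x hx =>
    sq_abs (g x) ▸ pow_le_pow_left₀ (abs_nonneg _) (h x hx) 2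
  calc ∫ x in a..b, g x ^ 2 ≤ ∫ _ in a..b, A ^ 2 :=
        intervalIntegral_le_of_nonneg_of_le_Ioo hab (fun _ _ => sq_nonneg _)
          intervalIntegrable_const hpt
    _ = A ^ 2 * (b - a) := by simp [mul_comm]

lemma integral_sq_le_of_abs_le_exp_layers {g : ℝ → ℝ} {a b β ε A B : ℝ} (hab : a ≤ b)
    (hβ : 0 < β) (hε : 0 < ε)
    (h : ∀ x ∈ Ioo a b,
      |g x| ≤ A * Real.exp (-(β * (x - a)) / ε) + B * Real.exp (-(β * (b - x)) / ε)) :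
    ∫ x in a..b, g x ^ 2 ≤ 2 * (A ^ 2 + B ^ 2) * (ε / β) := by
  set c := β / ε with hc_def
  have hc : 0 < c := div_pos hβ hε
  have hrate : ∀ y, -(β * y) / ε = -(c * y) := fun y => by ring
  simp only [hrate] at h
  have hpt : ∀ x ∈ Ioo a b, g x ^ 2 ≤
      2 * A ^ 2 * Real.exp (-(c * (x - a))) + 2 * B ^ 2 * Real.exp (-(c * (b - x))) := by
    intro x hx
    have he₁ : Real.exp (-(c * (x - a))) ≤ 1 :=
      Real.exp_le_one_iff.2 (by nlinarith [hx.1])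
    have he₂ : Real.exp (-(c * (b - x))) ≤ 1 :=
      Real.exp_le_one_iff.2 (by nlinarith [hx.2])
    have hsq := sq_abs (g x) ▸ pow_le_pow_left₀ (abs_nonneg _) (h x hx) 2
    nlinarith [sq_nonneg (A * Real.exp (-(c * (x - a))) - B * Real.exp (-(c * (b - x)))),
      mul_le_mul_of_nonneg_left he₁ (mul_nonneg (sq_nonneg A) (Real.exp_pos (-(c * (x - a)))).le),
      mul_le_mul_of_nonneg_left he₂ (mul_nonneg (sq_nonneg B) (Real.exp_pos (-(c * (b - x)))).le)]
  have hint₁ : IntervalIntegrable (fun x => Real.exp (-(c * (x - a)))) volume a b :=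
    Continuous.intervalIntegrable (by fun_prop) _ _
  have hint₂ : IntervalIntegrable (fun x => Real.exp (-(c * (b - x)))) volume a b :=
    Continuous.intervalIntegrable (by fun_prop) _ _
  calc ∫ x in a..b, g x ^ 2
      ≤ ∫ x in a..b, (2 * A ^ 2 * Real.exp (-(c * (x - a)))
          + 2 * B ^ 2 * Real.exp (-(c * (b - x)))) :=
        intervalIntegral_le_of_nonneg_of_le_Ioo hab (fun _ _ => sq_nonneg _)
          ((hint₁.const_mul _).add (hint₂.const_mul _)) hpt
    _ = 2 * A ^ 2 * (∫ x in a..b, Real.exp (-(c * (x - a))))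
          + 2 * B ^ 2 * ∫ x in a..b, Real.exp (-(c * (b - x))) := by
        rw [intervalIntegral.integral_add (hint₁.const_mul _) (hint₂.const_mul _),
          intervalIntegral.integral_const_mul, intervalIntegral.integral_const_mul]
    _ ≤ 2 * A ^ 2 * (1 / c) + 2 * B ^ 2 * (1 / c) := by
        gcongr
        exacts [integral_exp_neg_mul_sub_le hc a b, integral_exp_neg_mul_sub_le' hc a b]
    _ = 2 * (A ^ 2 + B ^ 2) * (ε / β) := by rw [hc_def, one_div_div]; ring

lemma integral_sq_le_sq_of_L2_add_L2_le {f : ℝ → ℝ} {a b c C : ℝ} (hab : a ≤ b) (hbc : b ≤ c)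
    (h : L2 f a b + L2 f b c ≤ C) :
    ∫ x in a..c, f x ^ 2 ≤ C ^ 2 := by
  have hsq : ∀ {s t : ℝ}, s ≤ t → ∫ x in s..t, f x ^ 2 = L2 f s t ^ 2 := fun hst =>
    (Real.sq_sqrt (intervalIntegral.integral_nonneg hst fun x _ => sq_nonneg _)).symm
  have hL₁ : 0 ≤ L2 f a b := Real.sqrt_nonneg _
  have hL₂ : 0 ≤ L2 f b c := Real.sqrt_nonneg _
  calc ∫ x in a..c, f x ^ 2 ≤ (∫ x in a..b, f x ^ 2) + ∫ x in b..c, f x ^ 2 :=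
        intervalIntegral_le_add_adjacent_of_nonneg hab hbc fun x => sq_nonneg _
    _ = L2 f a b ^ 2 + L2 f b c ^ 2 := by rw [hsq hab, hsq hbc]
    _ ≤ (L2 f a b + L2 f b c) ^ 2 := by nlinarith
    _ ≤ C ^ 2 := pow_le_pow_left₀ (add_nonneg hL₁ hL₂) h 2

lemma energySq_le_of_integral_sq_le {β δ A : ℝ} {u w : ℝ → ℝ} (hδ : 0 ≤ δ)
    (hw : ∫ x in (0:ℝ)..2, w x ^ 2 ≤ A) (hu' : ∫ x in (0:ℝ)..2, deriv u x ^ 2 ≤ A)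
    (hu : ∫ x in (0:ℝ)..2, u x ^ 2 ≤ A) :
    energySq β δ u w ≤ (1 + β ^ 2 / 2 + δ) * A := by
  have h₁ := mul_le_mul_of_nonneg_left hu' (by positivity : (0:ℝ) ≤ β ^ 2 / 2)
  have h₂ := mul_le_mul_of_nonneg_left hu hδ
  rw [energySq]
  linarith

lemma Real.sqrt_le_sqrt_mul_of_le_mul_sq {X K t : ℝ} (h : X ≤ K * t ^ 2) (ht : 0 ≤ t) :
    Real.sqrt X ≤ Real.sqrt K * t := by
  calc Real.sqrt X ≤ Real.sqrt (K * t ^ 2) := Real.sqrt_le_sqrt h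
    _ = Real.sqrt K * t := by rw [Real.sqrt_mul' K (sq_nonneg t), Real.sqrt_sq ht]

lemma indicator_add_indicator_of_mem_left {f g : ℝ → ℝ} {a b c x : ℝ} (hx : x ∈ Ioo a b) :
    indicator (Ioo a b) f x + indicator (Ioo b c) g x = f x := by
  have hx' : x ∉ Ioo b c := fun h => (hx.2.trans h.1).false
  simp [indicator_of_mem hx, indicator_of_notMem hx']

lemma indicator_add_indicator_of_mem_right {f g : ℝ → ℝ} {a b c x : ℝ} (hx : x ∈ Ioo b c) :
    indicator (Ioo a b) f x + indicator (Ioo b c) g x = g x := by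
  have hx' : x ∉ Ioo a b := fun h => (h.2.trans hx.1).false
  simp [indicator_of_mem hx, indicator_of_notMem hx']

lemma Real.rpow_add_half_sq {ε : ℝ} (hε : 0 < ε) (r : ℝ) :
    (ε ^ (r + 1 / 2)) ^ 2 = (ε ^ r) ^ 2 * ε := by
  rw [Real.rpow_add hε, ← Real.sqrt_eq_rpow, mul_pow, Real.sq_sqrt hε.le]

lemma Real.sq_rpow_le_sq_rpow_of_exponent_ge {ε s t : ℝ} (hε : 0 < ε) (hε₁ : ε ≤ 1) (hts : t ≤ s) :
    (ε ^ s) ^ 2 ≤ (ε ^ t) ^ 2 :=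
  pow_le_pow_left₀ (Real.rpow_nonneg hε.le s) (Real.rpow_le_rpow_of_exponent_ge hε hε₁ hts) 2

section Layers

variable {β ε C₀ r : ℝ} {g : ℝ → ℝ}

lemma integral_sq_le_of_abs_le_boundary_layers (hβ : 0 < β) (hε : 0 < ε)
    (h : ∀ x ∈ Ioo (0:ℝ) 2, |g x| ≤
      C₀ * ε ^ r * Real.exp (-(β * x) / ε) + C₀ * ε ^ r * Real.exp (-(β * (2 - x)) / ε)) :
    ∫ x in (0:ℝ)..2, g x ^ 2 ≤ 4 * C₀ ^ 2 / β * (ε ^ (r + 1 / 2)) ^ 2 := by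
  have hint := integral_sq_le_of_abs_le_exp_layers zero_le_two hβ hε (g := g)
    (A := C₀ * ε ^ r) (B := C₀ * ε ^ r) (by simpa only [sub_zero] using h)
  rw [Real.rpow_add_half_sq hε]
  convert hint using 1
  field_simp
  ring

lemma integral_sq_le_of_abs_le_interior_layer (hβ : 0 < β) (hε : 0 < ε)
    (h₁ : ∀ x ∈ Ioo (0:ℝ) 1, |g x| ≤ C₀ * ε ^ r * Real.exp (-(β * (1 - x)) / ε))
    (h₂ : ∀ x ∈ Ioo (1:ℝ) 2, |g x| ≤ C₀ * ε ^ r * Real.exp (-(β * (x - 1)) / ε)) :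
    ∫ x in (0:ℝ)..2, g x ^ 2 ≤ 4 * C₀ ^ 2 / β * (ε ^ (r + 1 / 2)) ^ 2 := by
  have hint₁ := integral_sq_le_of_abs_le_exp_layers zero_le_one hβ hε (g := g)
    (A := 0) (B := C₀ * ε ^ r) (by simpa only [zero_mul, zero_add] using h₁)
  have hint₂ := integral_sq_le_of_abs_le_exp_layers one_le_two hβ hε (g := g)
    (A := C₀ * ε ^ r) (B := 0) (by simpa only [zero_mul, add_zero] using h₂)
  have hsplit := intervalIntegral_le_add_adjacent_of_nonneg zero_le_one one_le_two
    fun x => sq_nonneg (g x)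
  rw [Real.rpow_add_half_sq hε]
  calc ∫ x in (0:ℝ)..2, g x ^ 2 ≤ 2 * (0 ^ 2 + (C₀ * ε ^ r) ^ 2) * (ε / β)
        + 2 * ((C₀ * ε ^ r) ^ 2 + 0 ^ 2) * (ε / β) := by linarith
    _ = 4 * C₀ ^ 2 / β * ((ε ^ r) ^ 2 * ε) := by field_simp; ring

end Layers

section Decomposition

variable {q m : ℕ} {β δ C₀ ε : ℝ} {S E₁ E₂ W₁ W₂ St E₁t E₂t W₁t W₂t : ℝ → ℝ}

lemma energySq_smooth_le (hδ : 0 ≤ δ) (hε₀ : 0 ≤ ε) (hε₁ : ε ≤ 1)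
    (hSol : SolDecompBounds q m β C₀ ε S E₁ E₂ W₁ W₂)
    (hTil : TildeDecompBounds q m β C₀ ε St E₁t E₂t W₁t W₂t) :
    energySq β δ S St ≤ (1 + β ^ 2 / 2 + δ) * (2 * C₀ ^ 2) := by
  have hS : ∀ k ≤ q + 1, ∫ x in (0:ℝ)..2, iteratedDeriv k S x ^ 2 ≤ 2 * C₀ ^ 2 := fun k hk =>
    (integral_sq_le_sq_of_L2_add_L2_le zero_le_one one_le_two (hSol k hk).1).trans
      (by nlinarith [sq_nonneg C₀])
  have hSt : ∀ {a b : ℝ}, a ≤ b → Ioo a b ⊆ Ioo 0 1 ∪ Ioo 1 2 →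
      ∫ x in a..b, St x ^ 2 ≤ (C₀ * ε) ^ 2 * (b - a) := fun hab hsub =>
    integral_sq_le_of_abs_le hab fun x hx => by
      simpa only [iteratedDeriv_zero] using (hTil 0 (Nat.zero_le _)).1 x (hsub hx)
  have hε_sq : ε ^ 2 ≤ 1 := pow_le_one₀ hε₀ hε₁
  refine energySq_le_of_integral_sq_le hδ ?_ (by simpa using hS 1 (by omega))
    (by simpa using hS 0 (Nat.zero_le _))
  calc ∫ x in (0:ℝ)..2, St x ^ 2 ≤ (∫ x in (0:ℝ)..1, St x ^ 2) + ∫ x in (1:ℝ)..2, St x ^ 2 :=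
        intervalIntegral_le_add_adjacent_of_nonneg zero_le_one one_le_two fun x => sq_nonneg _
    _ ≤ (C₀ * ε) ^ 2 * (1 - 0) + (C₀ * ε) ^ 2 * (2 - 1) :=
        add_le_add (hSt zero_le_one subset_union_left) (hSt one_le_two subset_union_right)
    _ ≤ 2 * C₀ ^ 2 := by nlinarith [sq_nonneg C₀]

lemma energySq_boundary_layers_le (hβ : 0 < β) (hδ : 0 ≤ δ) (hε : 0 < ε) (hε₁ : ε ≤ 1)
    (hE₁ : DifferentiableOn ℝ E₁ (Ioo 0 2)) (hE₂ : DifferentiableOn ℝ E₂ (Ioo 0 2))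
    (hSol : SolDecompBounds q m β C₀ ε S E₁ E₂ W₁ W₂)
    (hTil : TildeDecompBounds q m β C₀ ε St E₁t E₂t W₁t W₂t) :
    energySq β δ (fun x => E₁ x + E₂ x) (fun x => E₁t x + E₂t x)
      ≤ (1 + β ^ 2 / 2 + δ) * (4 * C₀ ^ 2 / β) * (ε ^ ((m:ℝ) - 1 / 2)) ^ 2 := by
  have hE : ∀ k ≤ q + 1, ∀ x ∈ Ioo (0:ℝ) 2,
      |iteratedDeriv k E₁ x + iteratedDeriv k E₂ x| ≤ C₀ * ε ^ ((m:ℝ) - k) * Real.exp (-(β * x) / ε)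
        + C₀ * ε ^ ((m:ℝ) - k) * Real.exp (-(β * (2 - x)) / ε) := fun k hk x hx =>
    (abs_add_le _ _).trans (add_le_add ((hSol k hk).2.1 x hx) ((hSol k hk).2.2.1 x hx))
  have hEt : ∀ x ∈ Ioo (0:ℝ) 2,
      |E₁t x + E₂t x| ≤ C₀ * ε ^ ((m:ℝ) - 1) * Real.exp (-(β * x) / ε)
        + C₀ * ε ^ ((m:ℝ) - 1) * Real.exp (-(β * (2 - x)) / ε) := fun x hx => by
    have h := (abs_add_le _ _).trans
      (add_le_add ((hTil 0 (Nat.zero_le _)).2.1 x hx) ((hTil 0 (Nat.zero_le _)).2.2.1 x hx))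
    simpa only [iteratedDeriv_zero, Nat.cast_zero, sub_zero] using h
  have hderiv : ∀ x ∈ Ioo (0:ℝ) 2, deriv (fun x => E₁ x + E₂ x) x = deriv E₁ x + deriv E₂ x :=
    fun x hx => deriv_fun_add (hE₁.differentiableAt (isOpen_Ioo.mem_nhds hx))
      (hE₂.differentiableAt (isOpen_Ioo.mem_nhds hx))
  have hexp : (m:ℝ) - 1 + 1 / 2 = m - 1 / 2 := by ring
  rw [mul_assoc]
  refine energySq_le_of_integral_sq_le hδ ?_ ?_ ?_
  · simpa only [hexp] using integral_sq_le_of_abs_le_boundary_layers hβ hε hEt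
  · refine hexp ▸ integral_sq_le_of_abs_le_boundary_layers hβ hε fun x hx => ?_
    simpa only [hderiv x hx, iteratedDeriv_one, Nat.cast_one] using hE 1 (by omega) x hx
  · refine (integral_sq_le_of_abs_le_boundary_layers (r := m) hβ hε fun x hx => ?_).trans
      (mul_le_mul_of_nonneg_left (Real.sq_rpow_le_sq_rpow_of_exponent_ge hε hε₁ (by linarith))
        (by positivity))
    simpa only [iteratedDeriv_zero, Nat.cast_zero, sub_zero] using hE 0 (Nat.zero_le _) x hx

lemma energySq_interior_layer_le (hβ : 0 < β) (hδ : 0 ≤ δ) (hε : 0 < ε) (hε₁ : ε ≤ 1)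
    (hSol : SolDecompBounds q m β C₀ ε S E₁ E₂ W₁ W₂)
    (hTil : TildeDecompBounds q m β C₀ ε St E₁t E₂t W₁t W₂t) :
    energySq β δ (fun x => indicator (Ioo (0:ℝ) 1) W₁ x + indicator (Ioo (1:ℝ) 2) W₂ x)
        (fun x => indicator (Ioo (0:ℝ) 1) W₁t x + indicator (Ioo (1:ℝ) 2) W₂t x)
      ≤ (1 + β ^ 2 / 2 + δ) * (4 * C₀ ^ 2 / β) * (ε ^ ((5:ℝ) / 2)) ^ 2 := by
  have hexp : (2:ℝ) + 1 / 2 = 5 / 2 := by norm_num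
  obtain ⟨-, -, -, hW₀₁, hW₀₂⟩ := hSol 0 (Nat.zero_le _)
  obtain ⟨-, -, -, hW₁₁, hW₁₂⟩ := hSol 1 (by omega)
  obtain ⟨-, -, -, hWt₁, hWt₂⟩ := hTil 0 (Nat.zero_le _)
  simp only [iteratedDeriv_zero, iteratedDeriv_one, Nat.cast_zero, Nat.cast_one, sub_zero,
    show (3:ℝ) - 1 = 2 by norm_num] at hW₀₁ hW₀₂ hW₁₁ hW₁₂ hWt₁ hWt₂
  rw [mul_assoc]
  refine energySq_le_of_integral_sq_le hδ ?_ ?_ ?_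
  · refine hexp ▸ integral_sq_le_of_abs_le_interior_layer hβ hε (fun x hx => ?_) fun x hx => ?_
    · rw [indicator_add_indicator_of_mem_left hx]; exact hWt₁ x hx
    · rw [indicator_add_indicator_of_mem_right hx]; exact hWt₂ x hx
  · refine hexp ▸ integral_sq_le_of_abs_le_interior_layer hβ hε (fun x hx => ?_) fun x hx => ?_
    · rw [Set.EqOn.deriv (g := W₁) (fun _ => indicator_add_indicator_of_mem_left) isOpen_Ioo hx]
      exact hW₁₁ x hx
    · rw [Set.EqOn.deriv (g := W₂) (fun _ => indicator_add_indicator_of_mem_right) isOpen_Ioo hx]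
      exact hW₁₂ x hx
  · refine (integral_sq_le_of_abs_le_interior_layer (r := 3) hβ hε (fun x hx => ?_)
      fun x hx => ?_).trans (mul_le_mul_of_nonneg_left
        (Real.sq_rpow_le_sq_rpow_of_exponent_ge hε hε₁ (by norm_num)) (by positivity))
    · rw [indicator_add_indicator_of_mem_left hx]; exact hW₀₁ x hx
    · rw [indicator_add_indicator_of_mem_right hx]; exact hW₀₂ x hx

end Decomposition

theorem weak_energy_norm_of_layers_general
    (β δ : ℝ) (q m : ℕ)
    (hβ : 0 < β) (hδ : 0 < δ) (C₀ : ℝ) (hC₀ : 0 < C₀) :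
    ∃ C > 0, ∀ ε : ℝ, 0 < ε → ε ≤ 1 →
      ∀ S E₁ E₂ W₁ W₂ St E₁t E₂t W₁t W₂t : ℝ → ℝ,
      ContDiffOn ℝ (1:ℕ) S (Ioo 0 1) → ContDiffOn ℝ (1:ℕ) S (Ioo 1 2) →
      ContDiffOn ℝ (1:ℕ) E₁ (Ioo 0 2) → ContDiffOn ℝ (1:ℕ) E₂ (Ioo 0 2) →
      ContDiffOn ℝ (1:ℕ) W₁ (Ioo 0 1) → ContDiffOn ℝ (1:ℕ) W₂ (Ioo 1 2) →
      SolDecompBounds q m β C₀ ε S E₁ E₂ W₁ W₂ →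
      TildeDecompBounds q m β C₀ ε St E₁t E₂t W₁t W₂t →
      Real.sqrt (energySq β δ S St) ≤ C ∧
      Real.sqrt (energySq β δ (fun x => E₁ x + E₂ x) (fun x => E₁t x + E₂t x))
        ≤ C * ε ^ ((m:ℝ) - 1/2) ∧
      Real.sqrt (energySq β δ
          (fun x => Set.indicator (Ioo (0:ℝ) 1) W₁ x + Set.indicator (Ioo (1:ℝ) 2) W₂ x)
          (fun x => Set.indicator (Ioo (0:ℝ) 1) W₁t x + Set.indicator (Ioo (1:ℝ) 2) W₂t x))
        ≤ C * ε ^ ((5:ℝ)/2) := by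
  set K := 1 + β ^ 2 / 2 + δ
  refine ⟨Real.sqrt (K * (2 * C₀ ^ 2)) + Real.sqrt (K * (4 * C₀ ^ 2 / β)), by positivity, ?_⟩
  rintro ε hε hε₁ S E₁ E₂ W₁ W₂ St E₁t E₂t W₁t W₂t - - hE₁ hE₂ - - hSol hTil
  have hsmooth := le_add_of_nonneg_right (a := Real.sqrt (K * (2 * C₀ ^ 2)))
    (Real.sqrt_nonneg (K * (4 * C₀ ^ 2 / β)))
  have hlayer := le_add_of_nonneg_left (a := Real.sqrt (K * (4 * C₀ ^ 2 / β)))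
    (Real.sqrt_nonneg (K * (2 * C₀ ^ 2)))
  have hlayer_le : ∀ {X s : ℝ}, X ≤ K * (4 * C₀ ^ 2 / β) * (ε ^ s) ^ 2 →
      Real.sqrt X ≤ (Real.sqrt (K * (2 * C₀ ^ 2)) + Real.sqrt (K * (4 * C₀ ^ 2 / β))) * ε ^ s :=
    fun hX => (Real.sqrt_le_sqrt_mul_of_le_mul_sq hX (Real.rpow_nonneg hε.le _)).trans
      (mul_le_mul_of_nonneg_right hlayer (Real.rpow_nonneg hε.le _))
  refine ⟨?_, ?_, ?_⟩
  · exact (Real.sqrt_le_sqrt (energySq_smooth_le hδ.le hε.le hε₁ hSol hTil)).trans hsmooth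
  · exact hlayer_le (energySq_boundary_layers_le hβ hδ.le hε hε₁
      (hE₁.differentiableOn one_ne_zero) (hE₂.differentiableOn one_ne_zero) hSol hTil)
  · exact hlayer_le (energySq_interior_layer_le hβ hδ.le hε hε₁ hSol hTil)

/-- Weakness of the energy norm (Remark 1 of the paper): for the components of the
solution decomposition, `|||(S,S̃)||| ≲ 1`, `|||(E,Ẽ)||| ≲ ε^{m-1/2}` and
`|||(W,W̃)||| ≲ ε^{5/2}`, so the layer contributions vanish as `ε → 0`. -/
theorem weak_energy_norm_of_layers
    (β δ : ℝ) (q m : ℕ) (hm : m = 1 ∨ m = 2) (hq : 1 ≤ q)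
    (hβ : 0 < β) (hδ : 0 < δ) (C₀ : ℝ) (hC₀ : 0 < C₀) :
    ∃ C > 0, ∀ ε : ℝ, 0 < ε → ε ≤ 1 →
      ∀ S E₁ E₂ W₁ W₂ St E₁t E₂t W₁t W₂t : ℝ → ℝ,
      ContDiffOn ℝ (1:ℕ) S (Ioo 0 1) → ContDiffOn ℝ (1:ℕ) S (Ioo 1 2) →
      ContDiffOn ℝ (1:ℕ) E₁ (Ioo 0 2) → ContDiffOn ℝ (1:ℕ) E₂ (Ioo 0 2) →
      ContDiffOn ℝ (1:ℕ) W₁ (Ioo 0 1) → ContDiffOn ℝ (1:ℕ) W₂ (Ioo 1 2) →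
      SolDecompBounds q m β C₀ ε S E₁ E₂ W₁ W₂ →
      TildeDecompBounds q m β C₀ ε St E₁t E₂t W₁t W₂t →
      Real.sqrt (energySq β δ S St) ≤ C ∧
      Real.sqrt (energySq β δ (fun x => E₁ x + E₂ x) (fun x => E₁t x + E₂t x))
        ≤ C * ε ^ ((m:ℝ) - 1/2) ∧
      Real.sqrt (energySq β δ
          (fun x => Set.indicator (Ioo (0:ℝ) 1) W₁ x + Set.indicator (Ioo (1:ℝ) 2) W₂ x)
          (fun x => Set.indicator (Ioo (0:ℝ) 1) W₁t x + Set.indicator (Ioo (1:ℝ) 2) W₂t x))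
        ≤ C * ε ^ ((5:ℝ)/2) :=
  weak_energy_norm_of_layers_general β δ q m hβ hδ C₀ hC₀
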